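/- There is a universal constant C such that the following holds. Let f : {-1,+1}^n → [-1,+1] be given by a multilinear polynomial of degree at most k. Then there exists a coordinate i ∈ [n] with Inf_i[f] ≥ e^{−C·k} · Var[f]². -/
import Mathlib


open Finset

/-- The ±1 value corresponding to a Boolean. -/
noncomputable def pm (b : Bool) : ℝ := if b then 1 else -1

/-- Evaluation of the multilinear polynomial with coefficients `a` at `x`. -/
noncomputable def evalPoly {n : ℕ} (a : Finset (Fin n) → ℝ) (x : Fin n → ℝ) : ℝ :=
  ∑ S : Finset (Fin n), a S * ∏ i ∈ S, x i

/-- Influence of coordinate `i`: `Inf_i[f] = ∑_{S∋i} a_S²`. -/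
noncomputable def boolInf {n : ℕ} (a : Finset (Fin n) → ℝ) (i : Fin n) : ℝ :=
  ∑ S ∈ Finset.univ.filter (fun S : Finset (Fin n) => i ∈ S), a S ^ 2

/-- Variance: `Var[f] = ∑_{S≠∅} a_S²`. -/
noncomputable def boolVar {n : ℕ} (a : Finset (Fin n) → ℝ) : ℝ :=
  ∑ S ∈ Finset.univ.filter (fun S : Finset (Fin n) => S ≠ ∅), a S ^ 2

lemma pm_mul_self (b : Bool) : pm b * pm b = 1 := by cases b <;> simp [pm]
lemma pm_sq (b : Bool) : pm b ^ 2 = 1 := by cases b <;> simp [pm]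
lemma abs_pm (b : Bool) : |pm b| = 1 := by cases b <;> simp [pm]
lemma pm_not (b : Bool) : pm (!b) = - pm b := by cases b <;> simp [pm]

namespace Stmt11

variable {n : ℕ}

/-- character -/
noncomputable def chi (S : Finset (Fin n)) (x : Fin n → Bool) : ℝ := ∏ i ∈ S, pm (x i)

/-- function value -/
noncomputable def Fval (a : Finset (Fin n) → ℝ) (x : Fin n → Bool) : ℝ :=
  ∑ S : Finset (Fin n), a S * chi S x

lemma Fval_eq (a : Finset (Fin n) → ℝ) (x : Fin n → Bool) :
    Fval a x = evalPoly a (fun i => pm (x i)) := rfl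

lemma abs_chi (S : Finset (Fin n)) (x) : |chi S x| = 1 := by
  rw [chi, Finset.abs_prod]
  simp [abs_pm]

lemma chi_ne_zero (S : Finset (Fin n)) (x) : chi S x ≠ 0 := by
  intro h
  have := abs_chi S x
  rw [h] at this; simp at this

/-- flip coordinate j -/
def flip (j : Fin n) (x : Fin n → Bool) : Fin n → Bool := Function.update x j (!(x j))

lemma flip_invol (j : Fin n) : Function.Involutive (flip j) := by
  intro x
  funext i
  by_cases h : i = j
  · subst h; simp [flip]
  · simp [flip, Function.update_of_ne h]

lemma sum_flip (j : Fin n) (Φ : (Fin n → Bool) → ℝ) :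
    ∑ x : Fin n → Bool, Φ (flip j x) = ∑ x : Fin n → Bool, Φ x :=
  Fintype.sum_equiv (Function.Involutive.toPerm _ (flip_invol j)) _ _ (fun _ => rfl)

lemma flip_apply_self (j : Fin n) (x : Fin n → Bool) : flip j x j = !(x j) := by
  simp [flip]

lemma flip_apply_ne (j i : Fin n) (x : Fin n → Bool) (h : i ≠ j) : flip j x i = x i := by
  simp [flip, Function.update_of_ne h]

lemma chi_flip {j : Fin n} {S : Finset (Fin n)} (hj : j ∉ S) (x) :
    chi S (flip j x) = chi S x := by
  refine Finset.prod_congr rfl fun i hi => ?_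
  rw [flip_apply_ne j i x (by rintro rfl; exact hj hi)]

lemma sum_pm_mul (j : Fin n) (Φ : (Fin n → Bool) → ℝ) (hΦ : ∀ x, Φ (flip j x) = Φ x) :
    ∑ x : Fin n → Bool, pm (x j) * Φ x = 0 := by
  have h := sum_flip j (fun x => pm (x j) * Φ x)
  have h2 : ∀ x : Fin n → Bool, pm (flip j x j) * Φ (flip j x) = - (pm (x j) * Φ x) := by
    intro x
    rw [flip_apply_self, pm_not, hΦ]
    ring
  rw [Finset.sum_congr rfl (fun x _ => h2 x), Finset.sum_neg_distrib] at h
  linarith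

lemma sum_chi_empty : ∑ x : Fin n → Bool, chi (∅ : Finset (Fin n)) x = 2 ^ n := by
  simp only [chi, Finset.prod_empty]
  rw [Finset.sum_const]
  simp [Fintype.card_fun]

lemma sum_chi {U : Finset (Fin n)} (hU : U ≠ ∅) : ∑ x : Fin n → Bool, chi U x = 0 := by
  obtain ⟨j, hj⟩ := Finset.nonempty_iff_ne_empty.2 hU
  have hrw : ∀ x : Fin n → Bool, chi U x = pm (x j) * chi (U.erase j) x := by
    intro x
    rw [chi, ← Finset.mul_prod_erase _ _ hj]; rfl
  rw [Finset.sum_congr rfl (fun x _ => hrw x)]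
  exact sum_pm_mul j _ (fun x => chi_flip (Finset.notMem_erase j U) x)

lemma chi_mul_chi (S T : Finset (Fin n)) (x : Fin n → Bool) :
    chi S x * chi T x = chi ((S \ T) ∪ (T \ S)) x := by
  classical
  have h1 : S = (S \ T) ∪ (S ∩ T) := by
    ext i; simp only [Finset.mem_sdiff, Finset.mem_inter, Finset.mem_union]; tauto
  have h2 : T = (T \ S) ∪ (S ∩ T) := by
    ext i; simp only [Finset.mem_sdiff, Finset.mem_inter, Finset.mem_union]; tauto
  have hd1 : Disjoint (S \ T) (S ∩ T) := by
    simp only [Finset.disjoint_left, Finset.mem_sdiff, Finset.mem_inter]; tauto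
  have hd2 : Disjoint (T \ S) (S ∩ T) := by
    simp only [Finset.disjoint_left, Finset.mem_sdiff, Finset.mem_inter]; tauto
  have hd3 : Disjoint (S \ T) (T \ S) := by
    simp only [Finset.disjoint_left, Finset.mem_sdiff]; tauto
  have key : (∏ i ∈ S ∩ T, pm (x i)) * (∏ i ∈ S ∩ T, pm (x i)) = 1 := by
    rw [← Finset.prod_mul_distrib]
    exact Finset.prod_eq_one (fun i _ => pm_mul_self _)
  have e1 : chi S x = (∏ i ∈ (S \ T), pm (x i)) * (∏ i ∈ (S ∩ T), pm (x i)) := by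
    rw [chi]
    conv_lhs => rw [h1]
    exact Finset.prod_union hd1
  have e2 : chi T x = (∏ i ∈ (T \ S), pm (x i)) * (∏ i ∈ (S ∩ T), pm (x i)) := by
    rw [chi]
    conv_lhs => rw [h2]
    exact Finset.prod_union hd2
  have e3 : chi ((S \ T) ∪ (T \ S)) x
      = (∏ i ∈ (S \ T), pm (x i)) * (∏ i ∈ (T \ S), pm (x i)) := Finset.prod_union hd3
  rw [e1, e2, e3]
  calc ((∏ i ∈ (S \ T), pm (x i)) * (∏ i ∈ (S ∩ T), pm (x i)))
        * ((∏ i ∈ (T \ S), pm (x i)) * (∏ i ∈ (S ∩ T), pm (x i)))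
      = ((∏ i ∈ (S \ T), pm (x i)) * (∏ i ∈ (T \ S), pm (x i)))
        * ((∏ i ∈ (S ∩ T), pm (x i)) * (∏ i ∈ (S ∩ T), pm (x i))) := by ring
    _ = (∏ i ∈ (S \ T), pm (x i)) * (∏ i ∈ (T \ S), pm (x i)) := by rw [key, mul_one]

lemma sdiff_union_sdiff_eq_empty_iff (S T : Finset (Fin n)) :
    (S \ T) ∪ (T \ S) = ∅ ↔ S = T := by
  constructor
  · intro h
    ext i
    have := Finset.ext_iff.mp h i
    simp only [Finset.mem_union, Finset.mem_sdiff, Finset.notMem_empty, iff_false] at this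
    tauto
  · rintro rfl; simp

lemma sum_chi_mul_chi (S T : Finset (Fin n)) :
    ∑ x : Fin n → Bool, chi S x * chi T x = if S = T then (2:ℝ) ^ n else 0 := by
  rw [Finset.sum_congr rfl (fun x _ => chi_mul_chi S T x)]
  by_cases h : S = T
  · subst h
    rw [if_pos rfl]
    have : (S \ S) ∪ (S \ S) = (∅ : Finset (Fin n)) := by simp
    rw [this]
    exact sum_chi_empty
  · rw [if_neg h, sum_chi]
    intro hc
    exact h ((sdiff_union_sdiff_eq_empty_iff S T).mp hc)

lemma parseval2 (a b : Finset (Fin n) → ℝ) :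
    ∑ x : Fin n → Bool, Fval a x * Fval b x = 2 ^ n * ∑ S : Finset (Fin n), a S * b S := by
  classical
  have expand : ∀ x : Fin n → Bool, Fval a x * Fval b x
      = ∑ S : Finset (Fin n), ∑ T : Finset (Fin n), (a S * b T) * (chi S x * chi T x) := by
    intro x
    rw [Fval, Fval, Finset.sum_mul_sum]
    exact Finset.sum_congr rfl fun S _ => Finset.sum_congr rfl fun T _ => by ring
  rw [Finset.sum_congr rfl (fun x _ => expand x), Finset.sum_comm, Finset.mul_sum]
  refine Finset.sum_congr rfl fun S _ => ?_
  rw [Finset.sum_comm]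
  have step : ∀ T : Finset (Fin n),
      ∑ x : Fin n → Bool, (a S * b T) * (chi S x * chi T x)
      = if S = T then a S * b T * (2:ℝ)^n else 0 := by
    intro T
    rw [← Finset.mul_sum, sum_chi_mul_chi, mul_ite, mul_zero]
  rw [Finset.sum_congr rfl (fun T _ => step T)]
  simp [eq_comm]
  ring

lemma parseval (a : Finset (Fin n) → ℝ) :
    ∑ x : Fin n → Bool, (Fval a x) ^ 2 = 2 ^ n * ∑ S : Finset (Fin n), (a S) ^ 2 := by
  have := parseval2 a a
  simpa [sq] using this

lemma fourier_coeff (a : Finset (Fin n) → ℝ) (S : Finset (Fin n)) :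
    ∑ x : Fin n → Bool, Fval a x * chi S x = 2 ^ n * a S := by
  classical
  have hb : ∀ x, Fval (fun T => if T = S then 1 else 0) x = chi S x := by
    intro x
    rw [Fval]
    simp
  have h2 := parseval2 a (fun T => if T = S then 1 else 0)
  rw [Finset.sum_congr rfl (fun x _ => by rw [hb x])] at h2
  rw [h2]
  simp

end Stmt11

namespace Stmt11
variable {n : ℕ}

lemma prod_one_add (y : Fin n → ℝ) (x : Fin n → Bool) :
    ∏ i : Fin n, (y i * pm (x i) + 1)
      = ∑ S : Finset (Fin n), (∏ i ∈ S, y i) * chi S x := by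
  classical
  rw [Finset.prod_add (fun i : Fin n => y i * pm (x i)) (fun _ : Fin n => (1:ℝ)) Finset.univ]
  rw [Finset.powerset_univ]
  refine Finset.sum_congr rfl fun S _ => ?_
  rw [Finset.prod_const_one, mul_one, chi, ← Finset.prod_mul_distrib]

lemma eval_extension (a : Finset (Fin n) → ℝ) (y : Fin n → ℝ) :
    (2:ℝ) ^ n * evalPoly a y
      = ∑ x : Fin n → Bool, Fval a x * ∏ i : Fin n, (y i * pm (x i) + 1) := by
  classical
  have : ∀ x : Fin n → Bool, Fval a x * ∏ i : Fin n, (y i * pm (x i) + 1)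
      = ∑ S : Finset (Fin n), (∏ i ∈ S, y i) * (Fval a x * chi S x) := by
    intro x
    rw [prod_one_add, Finset.mul_sum]
    exact Finset.sum_congr rfl fun S _ => by ring
  rw [Finset.sum_congr rfl (fun x _ => this x), Finset.sum_comm]
  have : ∀ S : Finset (Fin n),
      ∑ x : Fin n → Bool, (∏ i ∈ S, y i) * (Fval a x * chi S x)
        = (∏ i ∈ S, y i) * ((2:ℝ)^n * a S) := by
    intro S
    rw [← Finset.mul_sum, fourier_coeff]
  rw [Finset.sum_congr rfl (fun S _ => this S)]
  rw [evalPoly, Finset.mul_sum]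
  exact Finset.sum_congr rfl fun S _ => by ring

lemma abs_evalPoly_le (a : Finset (Fin n) → ℝ) (hb : ∀ x : Fin n → Bool, |Fval a x| ≤ 1)
    (y : Fin n → ℝ) (hy : ∀ i, |y i| ≤ 1) : |evalPoly a y| ≤ 1 := by
  classical
  have hw : ∀ (x : Fin n → Bool), 0 ≤ ∏ i : Fin n, (y i * pm (x i) + 1) := by
    intro x
    refine Finset.prod_nonneg fun i _ => ?_
    have h1 : |y i * pm (x i)| ≤ 1 := by
      rw [abs_mul, abs_pm, mul_one]; exact hy i
    have := abs_le.mp h1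
    linarith [this.1]
  have hkey := eval_extension a y
  have hsum : |∑ x : Fin n → Bool, Fval a x * ∏ i : Fin n, (y i * pm (x i) + 1)|
      ≤ ∑ x : Fin n → Bool, ∏ i : Fin n, (y i * pm (x i) + 1) := by
    refine (Finset.abs_sum_le_sum_abs _ _).trans ?_
    refine Finset.sum_le_sum fun x _ => ?_
    rw [abs_mul, abs_of_nonneg (hw x)]
    calc |Fval a x| * ∏ i : Fin n, (y i * pm (x i) + 1)
        ≤ 1 * ∏ i : Fin n, (y i * pm (x i) + 1) := by
          exact mul_le_mul_of_nonneg_right (hb x) (hw x)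
      _ = _ := one_mul _
  have htot : ∑ x : Fin n → Bool, ∏ i : Fin n, (y i * pm (x i) + 1) = (2:ℝ)^n := by
    have : ∀ x : Fin n → Bool, ∏ i : Fin n, (y i * pm (x i) + 1)
        = ∑ S : Finset (Fin n), (∏ i ∈ S, y i) * chi S x := fun x => prod_one_add y x
    rw [Finset.sum_congr rfl (fun x _ => this x), Finset.sum_comm]
    have : ∀ S : Finset (Fin n), ∑ x : Fin n → Bool, (∏ i ∈ S, y i) * chi S x
        = if S = ∅ then (2:ℝ)^n else 0 := by
      intro S
      rw [← Finset.mul_sum]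
      by_cases h : S = (∅ : Finset (Fin n))
      · subst h; rw [if_pos rfl, sum_chi_empty]; simp
      · rw [if_neg h, sum_chi h, mul_zero]
    rw [Finset.sum_congr rfl (fun S _ => this S)]
    simp
  have h2n : (0:ℝ) < 2 ^ n := by positivity
  rw [show evalPoly a y = ((2:ℝ)^n)⁻¹ * ((2:ℝ)^n * evalPoly a y) by field_simp, hkey]
  rw [abs_mul, abs_of_nonneg (by positivity : (0:ℝ) ≤ ((2:ℝ)^n)⁻¹)]
  calc ((2:ℝ)^n)⁻¹ * |∑ x : Fin n → Bool, Fval a x * ∏ i : Fin n, (y i * pm (x i) + 1)|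
      ≤ ((2:ℝ)^n)⁻¹ * (2:ℝ)^n := by
        refine mul_le_mul_of_nonneg_left ?_ (by positivity)
        exact le_trans hsum (le_of_eq htot)
    _ = 1 := by field_simp

end Stmt11

namespace Stmt11
variable {n : ℕ}

lemma sum_insert_reindex (j : Fin n) (φ : Finset (Fin n) → ℝ) :
    ∑ S ∈ Finset.univ.filter (fun S : Finset (Fin n) => j ∉ S), φ (insert j S)
      = ∑ S ∈ Finset.univ.filter (fun S : Finset (Fin n) => j ∈ S), φ S := by
  classical
  refine Finset.sum_nbij' (fun S => insert j S) (fun S => S.erase j) ?_ ?_ ?_ ?_ ?_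
  · intro S hS
    simp only [Finset.mem_filter, Finset.mem_univ, true_and] at hS ⊢
    exact Finset.mem_insert_self j S
  · intro S hS
    simp only [Finset.mem_filter, Finset.mem_univ, true_and] at hS ⊢
    exact Finset.notMem_erase j S
  · intro S hS
    simp only [Finset.mem_filter, Finset.mem_univ, true_and] at hS
    exact Finset.erase_insert hS
  · intro S hS
    simp only [Finset.mem_filter, Finset.mem_univ, true_and] at hS
    exact Finset.insert_erase hS
  · intro S _; rfl

/-- coefficients of the part not containing j -/
noncomputable def coefLow (j : Fin n) (a : Finset (Fin n) → ℝ) : Finset (Fin n) → ℝ :=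
  fun S => if j ∈ S then 0 else a S

/-- coefficients of D_j -/
noncomputable def coefHigh (j : Fin n) (a : Finset (Fin n) → ℝ) : Finset (Fin n) → ℝ :=
  fun S => if j ∈ S then 0 else a (insert j S)

lemma Fval_decomp (j : Fin n) (a : Finset (Fin n) → ℝ) (x : Fin n → Bool) :
    Fval a x = Fval (coefLow j a) x + pm (x j) * Fval (coefHigh j a) x := by
  classical
  have split : Fval a x
      = (∑ S ∈ Finset.univ.filter (fun S : Finset (Fin n) => j ∈ S), a S * chi S x)
        + ∑ S ∈ Finset.univ.filter (fun S : Finset (Fin n) => j ∉ S), a S * chi S x := by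
    rw [Fval, ← Finset.sum_filter_add_sum_filter_not Finset.univ (fun S => j ∈ S)]
  have hlow : Fval (coefLow j a) x
      = ∑ S ∈ Finset.univ.filter (fun S : Finset (Fin n) => j ∉ S), a S * chi S x := by
    rw [Fval, ← Finset.sum_filter_add_sum_filter_not Finset.univ (fun S => j ∈ S)]
    have h1 : ∑ S ∈ Finset.univ.filter (fun S : Finset (Fin n) => j ∈ S),
        coefLow j a S * chi S x = 0 := by
      refine Finset.sum_eq_zero fun S hS => ?_
      simp only [Finset.mem_filter] at hS
      simp [coefLow, hS.2]
    have h2 : ∀ S ∈ Finset.univ.filter (fun S : Finset (Fin n) => j ∉ S),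
        coefLow j a S * chi S x = a S * chi S x := by
      intro S hS
      simp only [Finset.mem_filter] at hS
      simp [coefLow, hS.2]
    rw [h1, Finset.sum_congr rfl h2, zero_add]
  have hhigh : pm (x j) * Fval (coefHigh j a) x
      = ∑ S ∈ Finset.univ.filter (fun S : Finset (Fin n) => j ∈ S), a S * chi S x := by
    rw [Fval, ← Finset.sum_filter_add_sum_filter_not Finset.univ (fun S => j ∈ S)]
    have h1 : ∑ S ∈ Finset.univ.filter (fun S : Finset (Fin n) => j ∈ S),
        coefHigh j a S * chi S x = 0 := by
      refine Finset.sum_eq_zero fun S hS => ?_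
      simp only [Finset.mem_filter] at hS
      simp [coefHigh, hS.2]
    rw [h1, zero_add, Finset.mul_sum]
    have h2 : ∀ S ∈ Finset.univ.filter (fun S : Finset (Fin n) => j ∉ S),
        pm (x j) * (coefHigh j a S * chi S x) = a (insert j S) * chi (insert j S) x := by
      intro S hS
      simp only [Finset.mem_filter, Finset.mem_univ, true_and] at hS
      have hins : chi (insert j S) x = pm (x j) * chi S x := by
        rw [chi, chi, Finset.prod_insert hS]
      rw [coefHigh, if_neg hS, hins]
      ring
    rw [Finset.sum_congr rfl h2]
    exact sum_insert_reindex j (fun S => a S * chi S x)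
  rw [split, hlow, hhigh]; ring

lemma sumsq_decomp (j : Fin n) (a : Finset (Fin n) → ℝ) :
    ∑ S : Finset (Fin n), (a S)^2
      = (∑ S : Finset (Fin n), (coefLow j a S)^2)
        + ∑ S : Finset (Fin n), (coefHigh j a S)^2 := by
  classical
  have e1 : ∑ S : Finset (Fin n), (coefLow j a S)^2
      = ∑ S ∈ Finset.univ.filter (fun S : Finset (Fin n) => j ∉ S), (a S)^2 := by
    rw [← Finset.sum_filter_add_sum_filter_not Finset.univ (fun S => j ∈ S)]
    have h1 : ∑ S ∈ Finset.univ.filter (fun S : Finset (Fin n) => j ∈ S),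
        (coefLow j a S)^2 = 0 := by
      refine Finset.sum_eq_zero fun S hS => ?_
      simp only [Finset.mem_filter] at hS
      simp [coefLow, hS.2]
    rw [h1, zero_add]
    refine Finset.sum_congr rfl fun S hS => ?_
    simp only [Finset.mem_filter] at hS
    simp [coefLow, hS.2]
  have e2 : ∑ S : Finset (Fin n), (coefHigh j a S)^2
      = ∑ S ∈ Finset.univ.filter (fun S : Finset (Fin n) => j ∈ S), (a S)^2 := by
    rw [← Finset.sum_filter_add_sum_filter_not Finset.univ (fun S => j ∈ S)]
    have h1 : ∑ S ∈ Finset.univ.filter (fun S : Finset (Fin n) => j ∈ S),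
        (coefHigh j a S)^2 = 0 := by
      refine Finset.sum_eq_zero fun S hS => ?_
      simp only [Finset.mem_filter] at hS
      simp [coefHigh, hS.2]
    rw [h1, zero_add]
    have h2 : ∀ S ∈ Finset.univ.filter (fun S : Finset (Fin n) => j ∉ S),
        (coefHigh j a S)^2 = (a (insert j S))^2 := by
      intro S hS
      simp only [Finset.mem_filter, Finset.mem_univ, true_and] at hS
      simp [coefHigh, hS]
    rw [Finset.sum_congr rfl h2]
    exact sum_insert_reindex j (fun S => (a S)^2)
  rw [e1, e2, add_comm]
  exact (Finset.sum_filter_add_sum_filter_not Finset.univ (fun S => j ∈ S) _).symm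

lemma Fval_flip {j : Fin n} {a : Finset (Fin n) → ℝ} (ha : ∀ S, a S ≠ 0 → j ∉ S)
    (x : Fin n → Bool) : Fval a (flip j x) = Fval a x := by
  rw [Fval, Fval]
  refine Finset.sum_congr rfl fun S _ => ?_
  by_cases h : a S = 0
  · rw [h, zero_mul, zero_mul]
  · rw [chi_flip (ha S h) x]

lemma coefLow_notmem (j : Fin n) (a : Finset (Fin n) → ℝ) :
    ∀ S, coefLow j a S ≠ 0 → j ∉ S := by
  intro S h
  by_contra hj
  exact h (by simp [coefLow, hj])

lemma coefHigh_notmem (j : Fin n) (a : Finset (Fin n) → ℝ) :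
    ∀ S, coefHigh j a S ≠ 0 → j ∉ S := by
  intro S h
  by_contra hj
  exact h (by simp [coefHigh, hj])

end Stmt11

namespace Stmt11
variable {n : ℕ}

lemma quartic_identity (A B e : ℝ) (h : e^2 = 1) :
    (A + e*B)^4 = A^4 + 6*A^2*B^2 + B^4 + e*(4*A^3*B + 4*A*B^3) := by
  linear_combination (6*A^2*B^2 + 4*A*B^3*e + B^4*(e^2+1)) * h

lemma le_of_sq_le_sq {L R : ℝ} (h : L^2 ≤ R^2) (hL : 0 ≤ L) (hR : 0 ≤ R) : L ≤ R := by
  nlinarith [h, hL, hR]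

lemma hyper24 (J : Finset (Fin n)) :
    ∀ (d : ℕ) (a : Finset (Fin n) → ℝ),
      (∀ S, a S ≠ 0 → S ⊆ J ∧ S.card ≤ d) →
      ∑ x : Fin n → Bool, (Fval a x)^4
        ≤ 9^d * 2^n * (∑ S : Finset (Fin n), (a S)^2)^2 := by
  classical
  induction J using Finset.induction_on with
  | empty =>
    intro d a ha
    have hF : ∀ x : Fin n → Bool, Fval a x = a ∅ := by
      intro x
      rw [Fval]
      rw [Finset.sum_eq_single (∅ : Finset (Fin n))]
      · simp [chi]
      · intro S _ hS
        by_cases h : a S = 0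
        · rw [h, zero_mul]
        · exact absurd (Finset.subset_empty.mp (ha S h).1) hS
      · simp
    have hsum : ∑ x : Fin n → Bool, (Fval a x)^4 = 2^n * (a ∅)^4 := by
      rw [Finset.sum_congr rfl (fun x _ => by rw [hF x])]
      rw [Finset.sum_const, Finset.card_univ, Fintype.card_fun, Fintype.card_bool,
        Fintype.card_fin, nsmul_eq_mul]
      push_cast
      ring
    rw [hsum]
    have h1 : (a ∅)^2 ≤ ∑ S : Finset (Fin n), (a S)^2 :=
      Finset.single_le_sum (fun S _ => sq_nonneg (a S)) (Finset.mem_univ _)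
    have h2 : (a ∅)^4 ≤ (∑ S : Finset (Fin n), (a S)^2)^2 := by
      have := pow_le_pow_left₀ (sq_nonneg (a ∅)) h1 2
      calc (a ∅)^4 = ((a ∅)^2)^2 := by ring
        _ ≤ _ := this
    have h9 : (1:ℝ) ≤ 9^d := one_le_pow₀ (by norm_num : (1:ℝ) ≤ 9)
    have h2n : (0:ℝ) ≤ 2^n := by positivity
    calc (2:ℝ)^n * (a ∅)^4 ≤ 2^n * (∑ S : Finset (Fin n), (a S)^2)^2 := by nlinarith [h2, h2n]
      _ ≤ 9^d * 2^n * (∑ S : Finset (Fin n), (a S)^2)^2 := by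
          nlinarith [h9, mul_nonneg h2n (sq_nonneg (∑ S : Finset (Fin n), (a S)^2))]
  | @insert j J' hj ih =>
    intro d a ha
    set A := coefLow j a with hAdef
    set B := coefHigh j a with hBdef
    have hA : ∀ S, A S ≠ 0 → S ⊆ J' ∧ S.card ≤ d := by
      intro S hS
      have hja : a S ≠ 0 := by
        intro h0
        apply hS
        simp [hAdef, coefLow, h0]
      have hjS : j ∉ S := coefLow_notmem j a S hS
      obtain ⟨h1, h2⟩ := ha S hja
      refine ⟨?_, h2⟩
      intro i hi
      rcases Finset.mem_insert.mp (h1 hi) with h | h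
      · exact absurd (h ▸ hi) hjS
      · exact h
    -- even/odd split
    have hsplit : ∑ x : Fin n → Bool, (Fval a x)^4
        = (∑ x : Fin n → Bool, (Fval A x)^4)
          + 6 * (∑ x : Fin n → Bool, (Fval A x)^2 * (Fval B x)^2)
          + (∑ x : Fin n → Bool, (Fval B x)^4) := by
      have hpt : ∀ x : Fin n → Bool, (Fval a x)^4
          = ((Fval A x)^4 + 6*(Fval A x)^2*(Fval B x)^2 + (Fval B x)^4)
            + pm (x j) * (4*(Fval A x)^3*(Fval B x) + 4*(Fval A x)*(Fval B x)^3) := by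
        intro x
        rw [Fval_decomp j a x]
        exact quartic_identity _ _ _ (pm_sq (x j))
      rw [Finset.sum_congr rfl (fun x _ => hpt x), Finset.sum_add_distrib]
      have hodd : ∑ x : Fin n → Bool,
          pm (x j) * (4*(Fval A x)^3*(Fval B x) + 4*(Fval A x)*(Fval B x)^3) = 0 := by
        refine sum_pm_mul j _ ?_
        intro x
        rw [Fval_flip (coefLow_notmem j a) x, Fval_flip (coefHigh_notmem j a) x]
      rw [hodd, add_zero, Finset.sum_add_distrib, Finset.sum_add_distrib, Finset.mul_sum]
      congr 1
      congr 1
      exact Finset.sum_congr rfl fun x _ => by ring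
    have hCS : (∑ x : Fin n → Bool, (Fval A x)^2 * (Fval B x)^2)^2
        ≤ (∑ x : Fin n → Bool, (Fval A x)^4) * (∑ x : Fin n → Bool, (Fval B x)^4) := by
      have := Finset.sum_mul_sq_le_sq_mul_sq Finset.univ
        (fun x : Fin n → Bool => (Fval A x)^2) (fun x : Fin n → Bool => (Fval B x)^2)
      calc (∑ x : Fin n → Bool, (Fval A x)^2 * (Fval B x)^2)^2
          ≤ (∑ x : Fin n → Bool, ((Fval A x)^2)^2) * (∑ x : Fin n → Bool, ((Fval B x)^2)^2) := this
        _ = _ := by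
            congr 1 <;> exact Finset.sum_congr rfl (fun x _ => by ring)
    have hmixnn : 0 ≤ ∑ x : Fin n → Bool, (Fval A x)^2 * (Fval B x)^2 :=
      Finset.sum_nonneg fun x _ => by positivity
    have hA0nn : (0:ℝ) ≤ ∑ S : Finset (Fin n), (A S)^2 :=
      Finset.sum_nonneg fun S _ => sq_nonneg _
    have hA1nn : (0:ℝ) ≤ ∑ S : Finset (Fin n), (B S)^2 :=
      Finset.sum_nonneg fun S _ => sq_nonneg _
    have h2n : (0:ℝ) ≤ 2^n := by positivity
    have hIH0 := ih d A hA
    rw [sumsq_decomp j a]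
    cases d with
    | zero =>
      have hBzero : ∀ S, B S = 0 := by
        intro S
        by_contra h0
        have hjS : j ∉ S := coefHigh_notmem j a S h0
        have hane : a (insert j S) ≠ 0 := by
          intro h1; apply h0; simp [hBdef, coefHigh, hjS, h1]
        have := (ha _ hane).2
        rw [Finset.card_insert_of_notMem hjS] at this
        omega
      have hFB : ∀ x : Fin n → Bool, Fval B x = 0 := by
        intro x; rw [Fval]
        exact Finset.sum_eq_zero fun S _ => by rw [hBzero S, zero_mul]
      have hBs : ∑ S : Finset (Fin n), (B S)^2 = 0 :=
        Finset.sum_eq_zero fun S _ => by rw [hBzero S]; ring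
      rw [hsplit, hBs, add_zero]
      have e1 : ∑ x : Fin n → Bool, (Fval A x)^2 * (Fval B x)^2 = 0 :=
        Finset.sum_eq_zero fun x _ => by rw [hFB x]; ring
      have e2 : ∑ x : Fin n → Bool, (Fval B x)^4 = 0 :=
        Finset.sum_eq_zero fun x _ => by rw [hFB x]; ring
      rw [e1, e2]
      simpa using hIH0
    | succ d' =>
      have hB : ∀ S, B S ≠ 0 → S ⊆ J' ∧ S.card ≤ d' := by
        intro S hS
        have hjS : j ∉ S := coefHigh_notmem j a S hS
        have hane : a (insert j S) ≠ 0 := by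
          intro h1; apply hS; simp [hBdef, coefHigh, hjS, h1]
        obtain ⟨h1, h2⟩ := ha _ hane
        constructor
        · intro i hi
          have : i ∈ insert j J' := h1 (Finset.mem_insert_of_mem hi)
          rcases Finset.mem_insert.mp this with h | h
          · exact absurd (h ▸ hi) hjS
          · exact h
        · rw [Finset.card_insert_of_notMem hjS] at h2
          omega
      have hIH1 := ih d' B hB
      have hmix : ∑ x : Fin n → Bool, (Fval A x)^2 * (Fval B x)^2
          ≤ 3^(2*d'+1) * 2^n * ((∑ S : Finset (Fin n), (A S)^2) * (∑ S : Finset (Fin n), (B S)^2)) := by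
        refine le_of_sq_le_sq ?_ hmixnn (by positivity)
        calc (∑ x : Fin n → Bool, (Fval A x)^2 * (Fval B x)^2)^2
            ≤ (∑ x : Fin n → Bool, (Fval A x)^4) * (∑ x : Fin n → Bool, (Fval B x)^4) := hCS
          _ ≤ (9^(d'+1) * 2^n * (∑ S : Finset (Fin n), (A S)^2)^2)
              * (9^d' * 2^n * (∑ S : Finset (Fin n), (B S)^2)^2) := by
              refine mul_le_mul hIH0 hIH1 (Finset.sum_nonneg fun x _ => by positivity) ?_
              positivity
          _ = (3^(2*d'+1) * 2^n * ((∑ S : Finset (Fin n), (A S)^2) * (∑ S : Finset (Fin n), (B S)^2)))^2 := by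
              rw [show (9:ℝ) = 3^2 by norm_num, ← pow_mul, ← pow_mul]
              ring
      have h9 : (9:ℝ)^(d'+1) = 3 * 3^(2*d'+1) := by
        rw [show (9:ℝ) = 3^2 by norm_num, ← pow_mul,
          show 2*(d'+1) = (2*d'+1)+1 by omega, pow_succ]
        ring
      have h99 : (9:ℝ)^d' ≤ 9^(d'+1) := by
        refine pow_le_pow_right₀ (by norm_num) ?_
        omega
      rw [hsplit]
      have expand : 9^(d'+1) * 2^n *
          ((∑ S : Finset (Fin n), (A S)^2) + (∑ S : Finset (Fin n), (B S)^2))^2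
          = 9^(d'+1) * 2^n * (∑ S : Finset (Fin n), (A S)^2)^2
            + 6 * (3^(2*d'+1) * 2^n * ((∑ S : Finset (Fin n), (A S)^2) * (∑ S : Finset (Fin n), (B S)^2)))
            + 9^(d'+1) * 2^n * (∑ S : Finset (Fin n), (B S)^2)^2 := by
        rw [h9]; ring
      rw [expand]
      have hlast : ∑ x : Fin n → Bool, (Fval B x)^4
          ≤ 9^(d'+1) * 2^n * (∑ S : Finset (Fin n), (B S)^2)^2 := by
        refine hIH1.trans ?_
        have hX : (0:ℝ) ≤ 2^n * (∑ S : Finset (Fin n), (B S)^2)^2 := by positivity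
        calc (9:ℝ)^d' * 2^n * (∑ S : Finset (Fin n), (B S)^2)^2
            = 9^d' * (2^n * (∑ S : Finset (Fin n), (B S)^2)^2) := by ring
          _ ≤ 9^(d'+1) * (2^n * (∑ S : Finset (Fin n), (B S)^2)^2) :=
              mul_le_mul_of_nonneg_right h99 hX
          _ = 9^(d'+1) * 2^n * (∑ S : Finset (Fin n), (B S)^2)^2 := by ring
      have hmid : 6 * (∑ x : Fin n → Bool, (Fval A x)^2 * (Fval B x)^2)
          ≤ 6 * (3^(2*d'+1) * 2^n * ((∑ S : Finset (Fin n), (A S)^2) * (∑ S : Finset (Fin n), (B S)^2))) := by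
        linarith [hmix]
      linarith [hIH0, hmid, hlast]

end Stmt11

namespace Stmt11
variable {n : ℕ}

lemma l2_le_l1 (k : ℕ) (b : Finset (Fin n) → ℝ)
    (hdeg : ∀ S, b S ≠ 0 → S.card ≤ k) :
    (2:ℝ)^n * (∑ x : Fin n → Bool, (Fval b x)^2)
      ≤ 9^k * (∑ x : Fin n → Bool, |Fval b x|)^2 := by
  classical
  set S1 := ∑ x : Fin n → Bool, |Fval b x| with hS1
  set S2 := ∑ x : Fin n → Bool, (Fval b x)^2 with hS2
  set S3 := ∑ x : Fin n → Bool, |Fval b x|^3 with hS3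
  set S4 := ∑ x : Fin n → Bool, (Fval b x)^4 with hS4
  have hS2nn : 0 ≤ S2 := Finset.sum_nonneg fun x _ => sq_nonneg _
  have hS1nn : 0 ≤ S1 := Finset.sum_nonneg fun x _ => abs_nonneg _
  have hS3nn : 0 ≤ S3 := Finset.sum_nonneg fun x _ => by positivity
  have hCS1 : S2^2 ≤ S1 * S3 := by
    refine Finset.sum_sq_le_sum_mul_sum_of_sq_eq_mul Finset.univ
      (fun x _ => abs_nonneg _) (fun x _ => by positivity) ?_
    intro x _
    rw [show |Fval b x| * |Fval b x|^3 = (|Fval b x|^2)^2 by ring, sq_abs]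
  have hCS2 : S3^2 ≤ S2 * S4 := by
    refine Finset.sum_sq_le_sum_mul_sum_of_sq_eq_mul Finset.univ
      (fun x _ => sq_nonneg _) (fun x _ => by positivity) ?_
    intro x _
    rw [show (|Fval b x|^3)^2 = (|Fval b x|^2)^3 by ring, sq_abs]
    ring
  have hhyp : (2:ℝ)^n * S4 ≤ 9^k * S2^2 := by
    have h24 := hyper24 Finset.univ k b (fun S hS => ⟨Finset.subset_univ S, hdeg S hS⟩)
    have hpars := parseval b
    rw [hS4, hS2, hpars]
    calc (2:ℝ)^n * ∑ x : Fin n → Bool, (Fval b x)^4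
        ≤ 2^n * (9^k * 2^n * (∑ S : Finset (Fin n), (b S)^2)^2) := by
          refine mul_le_mul_of_nonneg_left h24 (by positivity)
      _ = 9^k * ((2:ℝ)^n * ∑ S : Finset (Fin n), (b S)^2)^2 := by ring
  rcases eq_or_lt_of_le hS2nn with h0 | hpos
  · rw [← h0, mul_zero]
    positivity
  · have key : ((2:ℝ)^n * S2) * S2^3 ≤ (9^k * S1^2) * S2^3 := by
      calc ((2:ℝ)^n * S2) * S2^3 = (2:ℝ)^n * S2^4 := by ring
        _ = (2:ℝ)^n * (S2^2)^2 := by ring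
        _ ≤ (2:ℝ)^n * ((S1*S3)*(S1*S3)) := by
            refine mul_le_mul_of_nonneg_left ?_ (by positivity)
            calc (S2^2)^2 ≤ (S1*S3)^2 := by
                  refine pow_le_pow_left₀ (sq_nonneg _) hCS1 2
              _ = (S1*S3)*(S1*S3) := by ring
        _ = S1^2 * (S3^2) * (2:ℝ)^n := by ring
        _ ≤ S1^2 * (S2*S4) * (2:ℝ)^n := by
            refine mul_le_mul_of_nonneg_right (mul_le_mul_of_nonneg_left hCS2 (by positivity)) (by positivity)
        _ = S1^2 * S2 * ((2:ℝ)^n * S4) := by ring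
        _ ≤ S1^2 * S2 * (9^k * S2^2) := by
            refine mul_le_mul_of_nonneg_left hhyp ?_
            positivity
        _ = (9^k * S1^2) * S2^3 := by ring
    have hS23 : (0:ℝ) < S2^3 := by positivity
    exact le_of_mul_le_mul_right key hS23

end Stmt11

namespace Stmt11
variable {n : ℕ}

lemma pm_mul_Fval_coefHigh (a : Finset (Fin n) → ℝ) (i : Fin n) (x : Fin n → Bool) :
    pm (x i) * Fval (coefHigh i a) x
      = ∑ S ∈ Finset.univ.filter (fun S : Finset (Fin n) => i ∈ S), a S * chi S x := by
  classical
  rw [Fval, ← Finset.sum_filter_add_sum_filter_not Finset.univ (fun S => i ∈ S)]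
  have h1 : ∑ S ∈ Finset.univ.filter (fun S : Finset (Fin n) => i ∈ S),
      coefHigh i a S * chi S x = 0 := by
    refine Finset.sum_eq_zero fun S hS => ?_
    simp only [Finset.mem_filter] at hS
    simp [coefHigh, hS.2]
  rw [h1, zero_add, Finset.mul_sum]
  have h2 : ∀ S ∈ Finset.univ.filter (fun S : Finset (Fin n) => i ∉ S),
      pm (x i) * (coefHigh i a S * chi S x) = a (insert i S) * chi (insert i S) x := by
    intro S hS
    simp only [Finset.mem_filter, Finset.mem_univ, true_and] at hS
    have hins : chi (insert i S) x = pm (x i) * chi S x := by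
      rw [chi, chi, Finset.prod_insert hS]
    rw [coefHigh, if_neg hS, hins]
    ring
  rw [Finset.sum_congr rfl h2]
  exact sum_insert_reindex i (fun S => a S * chi S x)

lemma sumsq_coefHigh (a : Finset (Fin n) → ℝ) (i : Fin n) :
    ∑ S : Finset (Fin n), (coefHigh i a S)^2 = boolInf a i := by
  classical
  rw [boolInf]
  rw [← Finset.sum_filter_add_sum_filter_not Finset.univ (fun S : Finset (Fin n) => i ∈ S)]
  have h1 : ∑ S ∈ Finset.univ.filter (fun S : Finset (Fin n) => i ∈ S),
      (coefHigh i a S)^2 = 0 := by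
    refine Finset.sum_eq_zero fun S hS => ?_
    simp only [Finset.mem_filter] at hS
    simp [coefHigh, hS.2]
  rw [h1, zero_add]
  have h2 : ∀ S ∈ Finset.univ.filter (fun S : Finset (Fin n) => i ∉ S),
      (coefHigh i a S)^2 = (a (insert i S))^2 := by
    intro S hS
    simp only [Finset.mem_filter, Finset.mem_univ, true_and] at hS
    simp [coefHigh, hS]
  rw [Finset.sum_congr rfl h2]
  exact sum_insert_reindex i (fun S => (a S)^2)

lemma coefHigh_deg (a : Finset (Fin n) → ℝ) (i : Fin n) (k : ℕ)
    (hdeg : ∀ S : Finset (Fin n), k < S.card → a S = 0) :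
    ∀ S, coefHigh i a S ≠ 0 → S.card ≤ k := by
  intro S hS
  have hiS : i ∉ S := coefHigh_notmem i a S hS
  have hane : a (insert i S) ≠ 0 := by
    intro h1; apply hS; simp [coefHigh, hiS, h1]
  by_contra hc
  push_neg at hc
  refine hane (hdeg _ ?_)
  rw [Finset.card_insert_of_notMem hiS]
  omega

lemma parseval_coefHigh (a : Finset (Fin n) → ℝ) (i : Fin n) :
    ∑ x : Fin n → Bool, (Fval (coefHigh i a) x)^2 = 2^n * boolInf a i := by
  rw [parseval, sumsq_coefHigh]

lemma boolInf_nonneg (a : Finset (Fin n) → ℝ) (i : Fin n) : 0 ≤ boolInf a i :=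
  Finset.sum_nonneg fun S _ => sq_nonneg _

lemma boolVar_nonneg (a : Finset (Fin n) → ℝ) : 0 ≤ boolVar a :=
  Finset.sum_nonneg fun S _ => sq_nonneg _

lemma var_le_sum_inf (a : Finset (Fin n) → ℝ) :
    boolVar a ≤ ∑ i : Fin n, boolInf a i := by
  classical
  have swap : ∑ i : Fin n, boolInf a i
      = ∑ S : Finset (Fin n), (S.card : ℝ) * (a S)^2 := by
    have h1 : ∀ i : Fin n, boolInf a i
        = ∑ S : Finset (Fin n), (if i ∈ S then (a S)^2 else 0) := by
      intro i
      rw [boolInf, Finset.sum_filter]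
    rw [Finset.sum_congr rfl (fun i _ => h1 i), Finset.sum_comm]
    refine Finset.sum_congr rfl fun S _ => ?_
    rw [← Finset.sum_filter]
    have : Finset.univ.filter (fun i : Fin n => i ∈ S) = S := by
      ext i; simp
    rw [this, Finset.sum_const, nsmul_eq_mul]
  rw [swap, boolVar, Finset.sum_filter]
  refine Finset.sum_le_sum fun S _ => ?_
  by_cases h : S = (∅ : Finset (Fin n))
  · subst h; simp
  · rw [if_pos h]
    have hc : 1 ≤ (S.card : ℝ) := by
      have := Finset.card_pos.mpr (Finset.nonempty_iff_ne_empty.mpr h)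
      exact_mod_cast this
    nlinarith [sq_nonneg (a S)]

end Stmt11

namespace Stmt11

open Polynomial

lemma coeff_prod_X_sub_C_le (s : Finset ℕ) (w : ℕ → ℝ) :
    ∀ j, |(∏ m ∈ s, (X - C (w m))).coeff j| ≤ ∏ m ∈ s, (1 + |w m|) := by
  classical
  induction s using Finset.induction_on with
  | empty =>
    intro j
    rw [Finset.prod_empty, Finset.prod_empty]
    rcases Nat.eq_zero_or_pos j with h | h
    · subst h; simp
    · rw [Polynomial.coeff_one, if_neg (by omega)]
      simp
  | @insert m s hm ih =>
    intro j
    rw [Finset.prod_insert hm, Finset.prod_insert hm]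
    have hP : (0:ℝ) ≤ ∏ m ∈ s, (1 + |w m|) :=
      Finset.prod_nonneg fun m _ => by positivity
    have expand : ((X - C (w m)) * ∏ m ∈ s, (X - C (w m))).coeff j
        = (X * ∏ m ∈ s, (X - C (w m))).coeff j
          - w m * (∏ m ∈ s, (X - C (w m))).coeff j := by
      rw [sub_mul, Polynomial.coeff_sub, Polynomial.coeff_C_mul]
    rw [expand]
    rcases Nat.eq_zero_or_pos j with h | h
    · subst h
      rw [Polynomial.coeff_X_mul_zero, zero_sub, abs_neg, abs_mul]
      calc |w m| * |(∏ m ∈ s, (X - C (w m))).coeff 0|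
          ≤ |w m| * ∏ m ∈ s, (1 + |w m|) :=
            mul_le_mul_of_nonneg_left (ih 0) (abs_nonneg _)
        _ ≤ (1 + |w m|) * ∏ m ∈ s, (1 + |w m|) := by nlinarith [abs_nonneg (w m), hP]
    · obtain ⟨j', rfl⟩ : ∃ j', j = j' + 1 := ⟨j - 1, by omega⟩
      rw [Polynomial.coeff_X_mul]
      calc |(∏ m ∈ s, (X - C (w m))).coeff j' - w m * (∏ m ∈ s, (X - C (w m))).coeff (j'+1)|
          ≤ |(∏ m ∈ s, (X - C (w m))).coeff j'|
            + |w m| * |(∏ m ∈ s, (X - C (w m))).coeff (j'+1)| := by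
            rw [← abs_mul]; exact abs_sub _ _
        _ ≤ ∏ m ∈ s, (1 + |w m|) + |w m| * ∏ m ∈ s, (1 + |w m|) := by
            have h1 := ih j'
            have h2 := mul_le_mul_of_nonneg_left (ih (j'+1)) (abs_nonneg (w m))
            linarith
        _ = (1 + |w m|) * ∏ m ∈ s, (1 + |w m|) := by ring

lemma pow_self_le_exp_factorial : ∀ k : ℕ, (k:ℝ)^k ≤ Real.exp 1 ^ k * (k.factorial : ℝ) := by
  intro k
  induction k with
  | zero => simp
  | succ k ih =>
    rcases Nat.eq_zero_or_pos k with h | hk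
    · subst h
      have h1 : (1:ℝ) ≤ Real.exp 1 := by nlinarith [Real.add_one_le_exp (1:ℝ)]
      simpa using h1
    · have hkR : (0:ℝ) < k := by exact_mod_cast hk
      have hstep : ((k:ℝ)+1)^k ≤ Real.exp 1 * (k:ℝ)^k := by
        have h1 : ((k:ℝ)+1) = (k:ℝ) * (1 + 1/(k:ℝ)) := by field_simp
        have h2 : (1 + 1/(k:ℝ))^k ≤ Real.exp 1 := by
          have h3 : (1:ℝ) + 1/(k:ℝ) ≤ Real.exp (1/(k:ℝ)) := by
            have := Real.add_one_le_exp (1/(k:ℝ))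
            linarith
          calc (1 + 1/(k:ℝ))^k ≤ Real.exp (1/(k:ℝ))^k := by
                refine pow_le_pow_left₀ ?_ h3 k
                positivity
            _ = Real.exp ((k:ℝ) * (1/(k:ℝ))) := by
                rw [← Real.exp_nat_mul]
            _ = Real.exp 1 := by
                congr 1
                field_simp
        calc ((k:ℝ)+1)^k = (k:ℝ)^k * (1 + 1/(k:ℝ))^k := by
              rw [h1, mul_pow]
          _ ≤ (k:ℝ)^k * Real.exp 1 := by
              refine mul_le_mul_of_nonneg_left h2 (by positivity)
          _ = Real.exp 1 * (k:ℝ)^k := by ring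
      have hkfact : (0:ℝ) ≤ (k.factorial : ℝ) := by positivity
      calc ((k+1:ℕ):ℝ)^(k+1) = ((k:ℝ)+1) * ((k:ℝ)+1)^k := by push_cast; ring
        _ ≤ ((k:ℝ)+1) * (Real.exp 1 * (k:ℝ)^k) := by
            refine mul_le_mul_of_nonneg_left hstep (by positivity)
        _ ≤ ((k:ℝ)+1) * (Real.exp 1 * (Real.exp 1 ^ k * (k.factorial : ℝ))) := by
            refine mul_le_mul_of_nonneg_left ?_ (by positivity)
            refine mul_le_mul_of_nonneg_left ih (by positivity)
        _ = Real.exp 1 ^ (k+1) * (((k:ℝ)+1) * (k.factorial : ℝ)) := by ring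
        _ = Real.exp 1 ^ (k+1) * ((k+1).factorial : ℝ) := by
            rw [Nat.factorial_succ]
            push_cast
            ring

lemma choose_le_two_pow (k l : ℕ) : (k.choose l : ℝ) ≤ 2^k := by
  rcases le_or_gt l k with h | h
  · have : k.choose l ≤ 2^k := by
      rw [← Nat.sum_range_choose k]
      exact Finset.single_le_sum (fun m _ => Nat.zero_le _) (Finset.mem_range.mpr (by omega))
    exact_mod_cast this
  · rw [Nat.choose_eq_zero_of_lt h]
    simp only [Nat.cast_zero]
    positivity

end Stmt11

namespace Stmt11
open Polynomial

lemma erase_range_split (k l : ℕ) (hl : l ≤ k) :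
    (Finset.range (k+1)).erase l = Finset.range l ∪ Finset.Ico (l+1) (k+1) := by
  ext m
  simp only [Finset.mem_erase, Finset.mem_range, Finset.mem_union, Finset.mem_Ico]
  omega

lemma prod_range_cast_factorial (l : ℕ) :
    ∏ m ∈ Finset.range l, ((l:ℝ) - (m:ℝ)) = (l.factorial : ℝ) := by
  have h := Finset.prod_range_reflect (fun m => (l:ℝ) - (m:ℝ)) l
  rw [← h]
  have : ∀ j ∈ Finset.range l, (l:ℝ) - ((l - 1 - j : ℕ):ℝ) = ((j:ℝ) + 1) := by
    intro j hj
    rw [Finset.mem_range] at hj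
    have h1 : (l - 1 - j : ℕ) = l - (j+1) := by omega
    rw [h1, Nat.cast_sub (by omega)]
    push_cast
    ring
  rw [Finset.prod_congr rfl this]
  calc ∏ j ∈ Finset.range l, ((j:ℝ) + 1)
      = ((∏ j ∈ Finset.range l, (j + 1) : ℕ) : ℝ) := by push_cast; rfl
    _ = (l.factorial : ℝ) := by rw [Finset.prod_range_add_one_eq_factorial]

lemma prod_ico_cast_factorial (k l : ℕ) (hl : l ≤ k) :
    ∏ m ∈ Finset.Ico (l+1) (k+1), ((m:ℝ) - (l:ℝ)) = ((k-l).factorial : ℝ) := by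
  rw [Finset.prod_Ico_eq_prod_range]
  have h1 : k + 1 - (l + 1) = k - l := by omega
  rw [h1]
  have : ∀ j ∈ Finset.range (k - l), ((l + 1 + j : ℕ):ℝ) - (l:ℝ) = ((j:ℝ) + 1) := by
    intro j _
    push_cast
    ring
  rw [Finset.prod_congr rfl this]
  calc ∏ j ∈ Finset.range (k-l), ((j:ℝ) + 1)
      = ((∏ j ∈ Finset.range (k-l), (j + 1) : ℕ) : ℝ) := by push_cast; rfl
    _ = ((k-l).factorial : ℝ) := by rw [Finset.prod_range_add_one_eq_factorial]

lemma node_prod_eq (k l : ℕ) (hk : 1 ≤ k) (hl : l ≤ k) :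
    ∏ m ∈ (Finset.range (k+1)).erase l, |(l:ℝ)/k - (m:ℝ)/k|
      = (l.factorial : ℝ) * ((k-l).factorial : ℝ) / (k:ℝ)^k := by
  have hkR : (0:ℝ) < k := by exact_mod_cast hk
  have habs : ∀ m : ℕ, |(l:ℝ)/k - (m:ℝ)/k| = |(l:ℝ) - (m:ℝ)| / k := by
    intro m
    rw [div_sub_div_same, abs_div, abs_of_pos hkR]
  rw [Finset.prod_congr rfl (fun m _ => habs m)]
  rw [Finset.prod_div_distrib]
  have hcard : ((Finset.range (k+1)).erase l).card = k := by
    rw [Finset.card_erase_of_mem (Finset.mem_range.mpr (by omega)), Finset.card_range]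
    omega
  rw [Finset.prod_const, hcard]
  congr 1
  rw [erase_range_split k l hl]
  have hdisj : Disjoint (Finset.range l) (Finset.Ico (l+1) (k+1)) := by
    rw [Finset.disjoint_left]
    intro m hm1 hm2
    rw [Finset.mem_range] at hm1
    rw [Finset.mem_Ico] at hm2
    omega
  rw [Finset.prod_union hdisj]
  have e1 : ∏ m ∈ Finset.range l, |(l:ℝ) - (m:ℝ)| = (l.factorial : ℝ) := by
    rw [← prod_range_cast_factorial l]
    refine Finset.prod_congr rfl fun m hm => ?_
    rw [Finset.mem_range] at hm
    rw [abs_of_pos]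
    have : (m:ℝ) < l := by exact_mod_cast hm
    linarith
  have e2 : ∏ m ∈ Finset.Ico (l+1) (k+1), |(l:ℝ) - (m:ℝ)| = ((k-l).factorial : ℝ) := by
    rw [← prod_ico_cast_factorial k l hl]
    refine Finset.prod_congr rfl fun m hm => ?_
    rw [Finset.mem_Ico] at hm
    rw [abs_of_neg, neg_sub]
    have : (l:ℝ) < m := by exact_mod_cast (by omega : l < m)
    linarith
  rw [e1, e2]

lemma inv_node_prod_le (k l : ℕ) (hk : 1 ≤ k) (hl : l ≤ k) :
    |∏ m ∈ (Finset.range (k+1)).erase l, ((l:ℝ)/k - (m:ℝ)/k)⁻¹|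
      ≤ (2 * Real.exp 1)^k := by
  rw [abs_prod]
  simp only [abs_inv]
  rw [Finset.prod_inv_distrib]
  rw [node_prod_eq k l hk hl]
  have hfactpos : (0:ℝ) < (l.factorial : ℝ) * ((k-l).factorial : ℝ) := by positivity
  have hkR : (0:ℝ) < (k:ℝ)^k := by
    have : (0:ℝ) < (k:ℝ) := by exact_mod_cast hk
    positivity
  rw [inv_div]
  rw [div_le_iff₀ hfactpos]
  -- k^k ≤ (2e)^k * (l! * (k-l)!)
  have key : (k:ℝ)^k ≤ Real.exp 1 ^ k * (k.factorial : ℝ) := pow_self_le_exp_factorial k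
  have hfact : (k.factorial : ℝ) = (k.choose l : ℝ) * ((l.factorial : ℝ) * ((k-l).factorial : ℝ)) := by
    rw [← Nat.choose_mul_factorial_mul_factorial hl]
    push_cast
    ring
  have hchoose := choose_le_two_pow k l
  calc (k:ℝ)^k ≤ Real.exp 1 ^ k * (k.factorial : ℝ) := key
    _ = Real.exp 1 ^ k * ((k.choose l : ℝ) * ((l.factorial : ℝ) * ((k-l).factorial : ℝ))) := by
        rw [hfact]
    _ ≤ Real.exp 1 ^ k * ((2:ℝ)^k * ((l.factorial : ℝ) * ((k-l).factorial : ℝ))) := by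
        refine mul_le_mul_of_nonneg_left ?_ (by positivity)
        exact mul_le_mul_of_nonneg_right hchoose (le_of_lt hfactpos)
    _ = (2 * Real.exp 1)^k * ((l.factorial : ℝ) * ((k-l).factorial : ℝ)) := by
        rw [mul_pow]
        ring

lemma basis_coeff_bound (k l j : ℕ) (hk : 1 ≤ k) (hl : l ∈ Finset.range (k+1)) :
    |(Lagrange.basis (Finset.range (k+1)) (fun m : ℕ => (m:ℝ)/k) l).coeff j|
      ≤ 2^k * (2 * Real.exp 1)^k := by
  rw [Finset.mem_range] at hl
  have hbasis : Lagrange.basis (Finset.range (k+1)) (fun m : ℕ => (m:ℝ)/k) l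
      = C (∏ m ∈ (Finset.range (k+1)).erase l, ((l:ℝ)/k - (m:ℝ)/k)⁻¹)
        * ∏ m ∈ (Finset.range (k+1)).erase l, (X - C ((m:ℝ)/k)) := by
    rw [Lagrange.basis]
    simp only [Lagrange.basisDivisor]
    rw [Finset.prod_mul_distrib, ← map_prod]
  rw [hbasis, Polynomial.coeff_C_mul, abs_mul]
  have h1 := inv_node_prod_le k l hk (by omega)
  have h2 : |(∏ m ∈ (Finset.range (k+1)).erase l, (X - C ((m:ℝ)/k))).coeff j|
      ≤ ∏ m ∈ (Finset.range (k+1)).erase l, (1 + |(m:ℝ)/k|) := by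
    exact coeff_prod_X_sub_C_le _ (fun m => (m:ℝ)/k) j
  have h3 : ∏ m ∈ (Finset.range (k+1)).erase l, (1 + |(m:ℝ)/k|) ≤ 2^k := by
    have hcard : ((Finset.range (k+1)).erase l).card = k := by
      rw [Finset.card_erase_of_mem (Finset.mem_range.mpr (by omega)), Finset.card_range]
      omega
    calc ∏ m ∈ (Finset.range (k+1)).erase l, (1 + |(m:ℝ)/k|)
        ≤ ∏ m ∈ (Finset.range (k+1)).erase l, 2 := by
          refine Finset.prod_le_prod (fun m _ => by positivity) ?_
          intro m hm
          have hm' : m ≤ k := by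
            have := Finset.mem_of_mem_erase hm
            rw [Finset.mem_range] at this
            omega
          have hkR : (0:ℝ) < k := by exact_mod_cast hk
          have : |(m:ℝ)/k| ≤ 1 := by
            rw [abs_of_nonneg (by positivity)]
            rw [div_le_one hkR]
            exact_mod_cast hm'
          linarith
      _ = 2^k := by rw [Finset.prod_const, hcard]
  calc |∏ m ∈ (Finset.range (k+1)).erase l, ((l:ℝ)/k - (m:ℝ)/k)⁻¹|
        * |(∏ m ∈ (Finset.range (k+1)).erase l, (X - C ((m:ℝ)/k))).coeff j|
      ≤ (2 * Real.exp 1)^k * 2^k := by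
        refine mul_le_mul h1 (h2.trans h3) (abs_nonneg _) (by positivity)
    _ = 2^k * (2 * Real.exp 1)^k := by ring

lemma interp_coeff_bound (k : ℕ) (hk : 1 ≤ k) (p : ℝ[X])
    (hdeg : p.degree < (k+1 : ℕ))
    (heval : ∀ l ∈ Finset.range (k+1), |p.eval ((l:ℝ)/k)| ≤ 1) :
    ∀ j, |p.coeff j| ≤ (k+1) * (2^k * (2 * Real.exp 1)^k) := by
  intro j
  have hvs : Set.InjOn (fun m : ℕ => (m:ℝ)/k) (Finset.range (k+1)) := by
    intro a _ b _ hab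
    have hkR : (0:ℝ) < k := by exact_mod_cast hk
    field_simp at hab
    exact_mod_cast hab
  have hdeg' : p.degree < (Finset.range (k+1)).card := by
    rw [Finset.card_range]
    exact_mod_cast hdeg
  have heq := Lagrange.eq_interpolate hvs hdeg'
  have hco : p.coeff j = ∑ l ∈ Finset.range (k+1),
      p.eval ((l:ℝ)/k) * (Lagrange.basis (Finset.range (k+1)) (fun m : ℕ => (m:ℝ)/k) l).coeff j := by
    calc p.coeff j
        = ((Lagrange.interpolate (Finset.range (k+1)) (fun m : ℕ => (m:ℝ)/k))
            (fun i => p.eval ((i:ℝ)/k))).coeff j :=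
          congrArg (fun q : ℝ[X] => q.coeff j) heq
      _ = _ := by
          rw [Lagrange.interpolate_apply, Polynomial.finset_sum_coeff]
          exact Finset.sum_congr rfl fun l _ => Polynomial.coeff_C_mul _
  rw [hco]
  calc |∑ l ∈ Finset.range (k+1), p.eval ((l:ℝ)/k)
        * (Lagrange.basis (Finset.range (k+1)) (fun m : ℕ => (m:ℝ)/k) l).coeff j|
      ≤ ∑ l ∈ Finset.range (k+1), |p.eval ((l:ℝ)/k)
        * (Lagrange.basis (Finset.range (k+1)) (fun m : ℕ => (m:ℝ)/k) l).coeff j| :=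
        Finset.abs_sum_le_sum_abs _ _
    _ ≤ ∑ l ∈ Finset.range (k+1), 2^k * (2 * Real.exp 1)^k := by
        refine Finset.sum_le_sum fun l hl => ?_
        rw [abs_mul]
        calc |p.eval ((l:ℝ)/k)| * |(Lagrange.basis (Finset.range (k+1)) (fun m : ℕ => (m:ℝ)/k) l).coeff j|
            ≤ 1 * (2^k * (2 * Real.exp 1)^k) := by
              refine mul_le_mul (heval l hl) (basis_coeff_bound k l j hk hl) (abs_nonneg _) (by norm_num)
          _ = 2^k * (2 * Real.exp 1)^k := by ring
    _ = (k+1) * (2^k * (2 * Real.exp 1)^k) := by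
        rw [Finset.sum_const, Finset.card_range, nsmul_eq_mul]
        push_cast
        ring

end Stmt11

namespace Stmt11
open Polynomial
variable {n : ℕ}

lemma grad_identity (a : Finset (Fin n) → ℝ) (x : Fin n → Bool) (T : Finset (Fin n)) :
    ∑ i ∈ T, pm (x i) * Fval (coefHigh i a) x
      = ∑ S : Finset (Fin n), a S * chi S x * ((S ∩ T).card : ℝ) := by
  classical
  have h1 : ∀ i ∈ T, pm (x i) * Fval (coefHigh i a) x
      = ∑ S : Finset (Fin n), (if i ∈ S then a S * chi S x else 0) := by
    intro i _
    rw [pm_mul_Fval_coefHigh, Finset.sum_filter]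
  rw [Finset.sum_congr rfl h1, Finset.sum_comm]
  refine Finset.sum_congr rfl fun S _ => ?_
  rw [Finset.sum_ite_mem]
  rw [Finset.sum_const, nsmul_eq_mul]
  rw [Finset.inter_comm]
  ring

lemma grad_bound (a : Finset (Fin n) → ℝ) (k : ℕ) (hk : 1 ≤ k)
    (hdeg : ∀ S : Finset (Fin n), k < S.card → a S = 0)
    (hbdd : ∀ x : Fin n → Bool, |Fval a x| ≤ 1)
    (x : Fin n → Bool) (T : Finset (Fin n)) :
    |∑ i ∈ T, pm (x i) * Fval (coefHigh i a) x|
      ≤ ((k:ℝ)+1)^3 * (4 * Real.exp 1)^k := by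
  classical
  rw [grad_identity]
  set p : ℝ[X] := ∑ S : Finset (Fin n), C (a S * chi S x) * X ^ ((S ∩ T).card) with hp
  have hcard_le : ∀ S : Finset (Fin n), a S ≠ 0 → (S ∩ T).card ≤ k := by
    intro S hS
    by_contra hc
    push_neg at hc
    refine hS (hdeg S ?_)
    calc k < (S ∩ T).card := hc
      _ ≤ S.card := Finset.card_le_card (Finset.inter_subset_left)
  have heval : ∀ t : ℝ, p.eval t
      = evalPoly a (fun i => if i ∈ T then t * pm (x i) else pm (x i)) := by
    intro t
    rw [hp, Polynomial.eval_finset_sum]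
    rw [evalPoly]
    refine Finset.sum_congr rfl fun S _ => ?_
    rw [Polynomial.eval_mul, Polynomial.eval_C, Polynomial.eval_pow, Polynomial.eval_X]
    have hsplit : ∏ i ∈ S, (if i ∈ T then t * pm (x i) else pm (x i))
        = (∏ i ∈ S.filter (fun i => i ∈ T), (t * pm (x i)))
          * ∏ i ∈ S.filter (fun i => ¬ i ∈ T), pm (x i) := by
      rw [← Finset.prod_filter_mul_prod_filter_not S (fun i => i ∈ T)]
      congr 1
      · exact Finset.prod_congr rfl fun i hi => by
          rw [if_pos (Finset.mem_filter.mp hi).2]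
      · exact Finset.prod_congr rfl fun i hi => by
          rw [if_neg (Finset.mem_filter.mp hi).2]
    rw [hsplit]
    have hfil : S.filter (fun i => i ∈ T) = S ∩ T := Finset.filter_mem_eq_inter
    have hchi : chi S x = (∏ i ∈ S.filter (fun i => i ∈ T), pm (x i))
        * ∏ i ∈ S.filter (fun i => ¬ i ∈ T), pm (x i) :=
      (Finset.prod_filter_mul_prod_filter_not S (fun i => i ∈ T) _).symm
    rw [Finset.prod_mul_distrib, Finset.prod_const, hfil, hchi, hfil]
    ring
  have hevb : ∀ t : ℝ, 0 ≤ t → t ≤ 1 → |p.eval t| ≤ 1 := by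
    intro t ht0 ht1
    rw [heval t]
    refine abs_evalPoly_le a hbdd _ ?_
    intro i
    by_cases h : i ∈ T
    · rw [if_pos h, abs_mul, abs_pm, mul_one, abs_of_nonneg ht0]
      exact ht1
    · rw [if_neg h, abs_pm]
  have hdegp : p.degree < ((k+1 : ℕ) : WithBot ℕ) := by
    rw [hp]
    refine lt_of_le_of_lt (Polynomial.degree_sum_le _ _) ?_
    rw [Finset.sup_lt_iff (by exact_mod_cast WithBot.bot_lt_coe (k+1))]
    intro S _
    by_cases h : a S * chi S x = 0
    · rw [h, map_zero, zero_mul, Polynomial.degree_zero]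
      exact_mod_cast WithBot.bot_lt_coe (k+1)
    · have haS : a S ≠ 0 := fun h0 => h (by rw [h0, zero_mul])
      refine lt_of_le_of_lt (Polynomial.degree_C_mul_X_pow_le _ _) ?_
      exact_mod_cast Nat.lt_succ_of_le (hcard_le S haS)
  have hcoeff := interp_coeff_bound k hk p hdegp ?evb
  case evb =>
    intro l hl
    rw [Finset.mem_range] at hl
    have hkR : (0:ℝ) < k := by exact_mod_cast hk
    refine hevb _ (by positivity) ?_
    rw [div_le_one hkR]
    exact_mod_cast Nat.lt_succ_iff.mp hl
  -- coefficient identity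
  have hcoeff_id : ∀ j, p.coeff j
      = ∑ S : Finset (Fin n), (if (S ∩ T).card = j then a S * chi S x else 0) := by
    intro j
    rw [hp, Polynomial.finset_sum_coeff]
    refine Finset.sum_congr rfl fun S _ => ?_
    rw [Polynomial.coeff_C_mul, Polynomial.coeff_X_pow]
    by_cases h : (S ∩ T).card = j
    · rw [if_pos h, if_pos h.symm, mul_one]
    · rw [if_neg h, if_neg (fun hh => h hh.symm), mul_zero]
  -- target identity
  have htarget : ∑ S : Finset (Fin n), a S * chi S x * ((S ∩ T).card : ℝ)
      = ∑ j ∈ Finset.range (k+1), (j:ℝ) * p.coeff j := by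
    have hrhs : ∀ j ∈ Finset.range (k+1), (j:ℝ) * p.coeff j
        = ∑ S : Finset (Fin n), (if (S ∩ T).card = j then ((S ∩ T).card : ℝ) * (a S * chi S x) else 0) := by
      intro j _
      rw [hcoeff_id j, Finset.mul_sum]
      refine Finset.sum_congr rfl fun S _ => ?_
      by_cases h : (S ∩ T).card = j
      · rw [if_pos h, if_pos h, h]
      · rw [if_neg h, if_neg h, mul_zero]
    rw [Finset.sum_congr rfl hrhs, Finset.sum_comm]
    refine Finset.sum_congr rfl fun S _ => ?_
    rw [Finset.sum_ite_eq (Finset.range (k+1)) ((S ∩ T).card)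
      (fun _ => ((S ∩ T).card : ℝ) * (a S * chi S x))]
    by_cases h : (S ∩ T).card ∈ Finset.range (k+1)
    · rw [if_pos h]; ring
    · rw [if_neg h]
      have : a S = 0 := by
        refine hdeg S ?_
        rw [Finset.mem_range] at h
        have h2 : k < (S ∩ T).card := by omega
        calc k < (S ∩ T).card := h2
          _ ≤ S.card := Finset.card_le_card (Finset.inter_subset_left)
      rw [this]
      ring
  rw [htarget]
  calc |∑ j ∈ Finset.range (k+1), (j:ℝ) * p.coeff j|
      ≤ ∑ j ∈ Finset.range (k+1), |(j:ℝ) * p.coeff j| := Finset.abs_sum_le_sum_abs _ _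
    _ ≤ ∑ j ∈ Finset.range (k+1), (k:ℝ) * ((k+1) * (2^k * (2 * Real.exp 1)^k)) := by
        refine Finset.sum_le_sum fun j hj => ?_
        rw [Finset.mem_range] at hj
        rw [abs_mul]
        have hj1 : |(j:ℝ)| ≤ (k:ℝ) := by
          rw [abs_of_nonneg (by positivity)]
          exact_mod_cast Nat.lt_succ_iff.mp hj
        refine mul_le_mul hj1 (hcoeff j) (abs_nonneg _) (by positivity)
    _ = (k+1) * ((k:ℝ) * ((k+1) * (2^k * (2 * Real.exp 1)^k))) := by
        rw [Finset.sum_const, Finset.card_range, nsmul_eq_mul]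
        push_cast
        ring
    _ ≤ ((k:ℝ)+1)^3 * (4 * Real.exp 1)^k := by
        have h1 : (2:ℝ)^k * (2 * Real.exp 1)^k = (4 * Real.exp 1)^k := by
          rw [← mul_pow]
          congr 1
          ring
        rw [← h1]
        have hkk : (k:ℝ) ≤ (k:ℝ)+1 := by linarith
        have hpos : (0:ℝ) ≤ 2^k * (2 * Real.exp 1)^k := by positivity
        have hk1 : (0:ℝ) ≤ (k:ℝ)+1 := by positivity
        calc ((k:ℝ)+1) * ((k:ℝ) * (((k:ℝ)+1) * (2^k * (2 * Real.exp 1)^k)))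
            ≤ ((k:ℝ)+1) * (((k:ℝ)+1) * (((k:ℝ)+1) * (2^k * (2 * Real.exp 1)^k))) := by
              have hknn : (0:ℝ) ≤ (k:ℝ) := by positivity
              gcongr
          _ = ((k:ℝ)+1)^3 * (2^k * (2 * Real.exp 1)^k) := by ring

end Stmt11

namespace Stmt11
open Polynomial
variable {n : ℕ}

lemma grad_abs_sum (a : Finset (Fin n) → ℝ) (k : ℕ) (hk : 1 ≤ k)
    (hdeg : ∀ S : Finset (Fin n), k < S.card → a S = 0)
    (hbdd : ∀ x : Fin n → Bool, |Fval a x| ≤ 1) (x : Fin n → Bool) :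
    ∑ i : Fin n, |Fval (coefHigh i a) x|
      ≤ 2 * (((k:ℝ)+1)^3 * (4 * Real.exp 1)^k) := by
  classical
  set q : Fin n → ℝ := fun i => pm (x i) * Fval (coefHigh i a) x with hq
  have habs : ∀ i, |Fval (coefHigh i a) x| = |q i| := by
    intro i
    rw [hq]
    simp only []
    rw [abs_mul, abs_pm, one_mul]
  rw [Finset.sum_congr rfl (fun i _ => habs i)]
  rw [← Finset.sum_filter_add_sum_filter_not Finset.univ (fun i => 0 ≤ q i)]
  set B := ((k:ℝ)+1)^3 * (4 * Real.exp 1)^k with hB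
  have h1 : ∑ i ∈ Finset.univ.filter (fun i : Fin n => 0 ≤ q i), |q i| ≤ B := by
    have e : ∑ i ∈ Finset.univ.filter (fun i : Fin n => 0 ≤ q i), |q i|
        = ∑ i ∈ Finset.univ.filter (fun i : Fin n => 0 ≤ q i), q i := by
      refine Finset.sum_congr rfl fun i hi => ?_
      rw [Finset.mem_filter] at hi
      exact abs_of_nonneg hi.2
    rw [e]
    have := grad_bound a k hk hdeg hbdd x (Finset.univ.filter (fun i : Fin n => 0 ≤ q i))
    calc ∑ i ∈ Finset.univ.filter (fun i : Fin n => 0 ≤ q i), q i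
        ≤ |∑ i ∈ Finset.univ.filter (fun i : Fin n => 0 ≤ q i), q i| := le_abs_self _
      _ ≤ B := this
  have h2 : ∑ i ∈ Finset.univ.filter (fun i : Fin n => ¬ 0 ≤ q i), |q i| ≤ B := by
    have e : ∑ i ∈ Finset.univ.filter (fun i : Fin n => ¬ 0 ≤ q i), |q i|
        = - ∑ i ∈ Finset.univ.filter (fun i : Fin n => ¬ 0 ≤ q i), q i := by
      rw [← Finset.sum_neg_distrib]
      refine Finset.sum_congr rfl fun i hi => ?_
      rw [Finset.mem_filter] at hi
      push_neg at hi
      exact abs_of_neg hi.2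
    rw [e]
    have := grad_bound a k hk hdeg hbdd x (Finset.univ.filter (fun i : Fin n => ¬ 0 ≤ q i))
    calc - ∑ i ∈ Finset.univ.filter (fun i : Fin n => ¬ 0 ≤ q i), q i
        ≤ |∑ i ∈ Finset.univ.filter (fun i : Fin n => ¬ 0 ≤ q i), q i| := neg_le_abs _
      _ ≤ B := this
  linarith

lemma numeric_bound (k : ℕ) (hk : 1 ≤ k) :
    4 * 9^k * ((((k:ℝ)+1)^3 * (4 * Real.exp 1)^k))^2 ≤ Real.exp (20*k) := by
  have hkR : (1:ℝ) ≤ k := by exact_mod_cast hk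
  have he2 : (2:ℝ) ≤ Real.exp 1 := by nlinarith [Real.add_one_le_exp (1:ℝ)]
  have hexp_pos : (0:ℝ) < Real.exp 1 := Real.exp_pos 1
  -- 4 ≤ exp (2k)
  have e1 : (4:ℝ) ≤ Real.exp (2*k) := by
    calc (4:ℝ) = 2^2 := by norm_num
      _ ≤ Real.exp 1 ^ 2 := by nlinarith [he2]
      _ = Real.exp 2 := by rw [← Real.exp_nat_mul]; norm_num
      _ ≤ Real.exp (2*k) := Real.exp_le_exp.mpr (by nlinarith [hkR])
  -- 9^k ≤ exp (3k)
  have he27 : (2.7:ℝ) ≤ Real.exp 1 := by nlinarith [Real.exp_one_gt_d9]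
  have h9 : (9:ℝ) ≤ Real.exp 3 := by
    have : Real.exp 3 = Real.exp 1 ^ 3 := by rw [← Real.exp_nat_mul]; norm_num
    rw [this]
    have hsq : (7.29:ℝ) ≤ Real.exp 1^2 := by nlinarith [he27]
    nlinarith [mul_le_mul hsq he27 (by norm_num : (0:ℝ) ≤ 2.7) (by positivity : (0:ℝ) ≤ Real.exp 1 ^ 2)]
  have e2 : (9:ℝ)^k ≤ Real.exp (3*k) := by
    calc (9:ℝ)^k ≤ (Real.exp 3)^k := pow_le_pow_left₀ (by norm_num) h9 k
      _ = Real.exp (k * 3) := by rw [← Real.exp_nat_mul]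
      _ = Real.exp (3*k) := by ring_nf
  -- (k+1)^6 ≤ exp (6k)
  have e3 : ((k:ℝ)+1)^6 ≤ Real.exp (6*k) := by
    have h := Real.add_one_le_exp (k:ℝ)
    calc ((k:ℝ)+1)^6 ≤ (Real.exp k)^6 := by
          refine pow_le_pow_left₀ (by positivity) h 6
      _ = Real.exp ((6:ℕ) * k) := by rw [← Real.exp_nat_mul]
      _ = Real.exp (6*k) := by norm_num
  -- (4e)^{2k} ≤ exp (6k)
  have h4e : 4 * Real.exp 1 ≤ Real.exp 3 := by
    have h3 : Real.exp 3 = Real.exp 1 ^ 3 := by rw [← Real.exp_nat_mul]; norm_num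
    have h4 : (4:ℝ) ≤ Real.exp 1 ^ 2 := by nlinarith [he2]
    rw [h3]
    nlinarith [mul_le_mul_of_nonneg_right h4 hexp_pos.le]
  have e4 : ((4 * Real.exp 1)^k)^2 ≤ Real.exp (6*k) := by
    calc ((4 * Real.exp 1)^k)^2 ≤ ((Real.exp 3)^k)^2 := by
          refine pow_le_pow_left₀ (by positivity) ?_ 2
          exact pow_le_pow_left₀ (by positivity) h4e k
      _ = Real.exp ((k:ℝ) * 3) ^ 2 := by rw [← Real.exp_nat_mul]
      _ = Real.exp (6*k) := by
          rw [sq, ← Real.exp_add]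
          ring_nf
  have expand : 4 * 9^k * ((((k:ℝ)+1)^3 * (4 * Real.exp 1)^k))^2
      = 4 * (9:ℝ)^k * ((k:ℝ)+1)^6 * ((4 * Real.exp 1)^k)^2 := by ring
  rw [expand]
  have hnn1 : (0:ℝ) ≤ 9^k := by positivity
  have hnn2 : (0:ℝ) ≤ ((k:ℝ)+1)^6 := by positivity
  have hnn3 : (0:ℝ) ≤ ((4 * Real.exp 1)^k)^2 := by positivity
  calc 4 * (9:ℝ)^k * ((k:ℝ)+1)^6 * ((4 * Real.exp 1)^k)^2
      ≤ Real.exp (2*k) * Real.exp (3*k) * Real.exp (6*k) * Real.exp (6*k) := by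
        have s1 : (4:ℝ) * 9^k ≤ Real.exp (2*k) * Real.exp (3*k) :=
          mul_le_mul e1 e2 hnn1 (by positivity)
        have s2 : (4:ℝ) * 9^k * ((k:ℝ)+1)^6 ≤ Real.exp (2*k) * Real.exp (3*k) * Real.exp (6*k) :=
          mul_le_mul s1 e3 hnn2 (by positivity)
        exact mul_le_mul s2 e4 hnn3 (by positivity)
    _ = Real.exp (17*k) := by
        rw [← Real.exp_add, ← Real.exp_add, ← Real.exp_add]
        ring_nf
    _ ≤ Real.exp (20*k) := Real.exp_le_exp.mpr (by nlinarith [hkR])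

end Stmt11

open Stmt11 in
theorem stmt11 :
    ∃ C : ℝ, 0 < C ∧
      ∀ (n k : ℕ), 0 < n →
        ∀ a : Finset (Fin n) → ℝ,
          (∀ S : Finset (Fin n), k < S.card → a S = 0) →
          (∀ x : Fin n → Bool, evalPoly a (fun i => pm (x i)) ∈ Set.Icc (-1 : ℝ) 1) →
          ∃ i : Fin n, Real.exp (-(C * k)) * boolVar a ^ 2 ≤ boolInf a i := by
  classical
  refine ⟨20, by norm_num, ?_⟩
  intro n k hn a hdeg hbdd'
  have hbdd : ∀ x : Fin n → Bool, |Fval a x| ≤ 1 := by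
    intro x
    have := hbdd' x
    rw [Set.mem_Icc] at this
    rw [Fval_eq]
    exact abs_le.mpr this
  have hi0 : (⟨0, hn⟩ : Fin n) ∈ (Finset.univ : Finset (Fin n)) := Finset.mem_univ _
  by_cases hV : boolVar a = 0
  · refine ⟨⟨0, hn⟩, ?_⟩
    rw [hV]
    simpa using boolInf_nonneg a ⟨0, hn⟩
  have hVpos : 0 < boolVar a := lt_of_le_of_ne (boolVar_nonneg a) (Ne.symm hV)
  have hk : 1 ≤ k := by
    by_contra hc
    push_neg at hc
    interval_cases k
    apply hV
    rw [boolVar]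
    refine Finset.sum_eq_zero fun S hS => ?_
    rw [Finset.mem_filter] at hS
    have : 0 < S.card := Finset.card_pos.mpr (Finset.nonempty_iff_ne_empty.mpr hS.2)
    rw [hdeg S this]
    ring
  -- maximizer
  obtain ⟨i₀, -, hmax⟩ := Finset.exists_max_image (Finset.univ : Finset (Fin n))
    (boolInf a) ⟨⟨0, hn⟩, hi0⟩
  refine ⟨i₀, ?_⟩
  set M := boolInf a i₀ with hM
  have hMnn : 0 ≤ M := boolInf_nonneg a i₀
  set N : ℝ := 2^n with hN
  have hNpos : (0:ℝ) < N := by rw [hN]; positivity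
  set B := ((k:ℝ)+1)^3 * (4 * Real.exp 1)^k with hB
  have hBpos : 0 < B := by rw [hB]; positivity
  set c : Fin n → ℝ := fun i => ∑ x : Fin n → Bool, |Fval (coefHigh i a) x| with hc
  have hcnn : ∀ i, 0 ≤ c i := fun i => Finset.sum_nonneg fun x _ => abs_nonneg _
  -- per-coordinate bound
  have hper : ∀ i : Fin n, boolInf a i ≤ Real.sqrt M * (3^k * c i / N) := by
    intro i
    have hL := l2_le_l1 k (coefHigh i a) (coefHigh_deg a i k hdeg)
    rw [parseval_coefHigh] at hL
    -- hL : 2^n * (2^n * boolInf a i) ≤ 9^k * (c i)^2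
    have hsq : boolInf a i ≤ (3^k * c i / N)^2 := by
      rw [div_pow, mul_pow]
      have h39 : ((3:ℝ)^k)^2 = 9^k := by
        rw [← pow_mul, show (9:ℝ) = 3^2 by norm_num, ← pow_mul]
        ring_nf
      rw [h39]
      rw [le_div_iff₀ (by positivity)]
      calc boolInf a i * N^2 = N * (N * boolInf a i) := by ring
        _ ≤ 9^k * (c i)^2 := hL
    have hs1 : Real.sqrt (boolInf a i) ≤ 3^k * c i / N := by
      have h := Real.sqrt_le_sqrt hsq
      rwa [Real.sqrt_sq (by positivity)] at h
    calc boolInf a i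
        = Real.sqrt (boolInf a i) * Real.sqrt (boolInf a i) := by
          rw [Real.mul_self_sqrt (boolInf_nonneg a i)]
      _ ≤ Real.sqrt M * (3^k * c i / N) := by
          refine mul_le_mul ?_ hs1 (Real.sqrt_nonneg _) (Real.sqrt_nonneg _)
          exact Real.sqrt_le_sqrt (hmax i (Finset.mem_univ i))
  -- sum of c
  have hsumc : ∑ i : Fin n, c i ≤ N * (2 * B) := by
    have hswap : ∑ i : Fin n, c i
        = ∑ x : Fin n → Bool, ∑ i : Fin n, |Fval (coefHigh i a) x| := Finset.sum_comm
    rw [hswap]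
    calc ∑ x : Fin n → Bool, ∑ i : Fin n, |Fval (coefHigh i a) x|
        ≤ ∑ x : Fin n → Bool, 2 * B := by
          refine Finset.sum_le_sum fun x _ => ?_
          rw [hB]
          exact grad_abs_sum a k hk hdeg hbdd x
      _ = N * (2 * B) := by
          rw [Finset.sum_const, Finset.card_univ, Fintype.card_fun, Fintype.card_bool,
            Fintype.card_fin, nsmul_eq_mul, hN]
          push_cast
          ring
  -- main chain
  have hchain : boolVar a ≤ Real.sqrt M * (3^k * (2 * B)) := by
    calc boolVar a ≤ ∑ i : Fin n, boolInf a i := var_le_sum_inf a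
      _ ≤ ∑ i : Fin n, Real.sqrt M * (3^k * c i / N) :=
          Finset.sum_le_sum fun i _ => hper i
      _ = Real.sqrt M * (3^k / N) * ∑ i : Fin n, c i := by
          rw [Finset.mul_sum]
          exact Finset.sum_congr rfl fun i _ => by ring
      _ ≤ Real.sqrt M * (3^k / N) * (N * (2 * B)) := by
          refine mul_le_mul_of_nonneg_left hsumc ?_
          positivity
      _ = Real.sqrt M * (3^k * (2 * B)) := by
          field_simp
  have hsqchain : boolVar a ^ 2 ≤ M * (9^k * 4 * B^2) := by
    have h1 : boolVar a ^ 2 ≤ (Real.sqrt M * (3^k * (2 * B)))^2 :=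
      pow_le_pow_left₀ hVpos.le hchain 2
    calc boolVar a ^ 2 ≤ (Real.sqrt M * (3^k * (2 * B)))^2 := h1
      _ = (Real.sqrt M)^2 * ((3^k)^2 * (4 * B^2)) := by ring
      _ = M * (9^k * 4 * B^2) := by
          rw [Real.sq_sqrt hMnn]
          have h39 : ((3:ℝ)^k)^2 = 9^k := by
            rw [← pow_mul, show (9:ℝ) = 3^2 by norm_num, ← pow_mul]
            ring_nf
          rw [h39]
          ring
  have hnum : 9^k * 4 * B^2 ≤ Real.exp (20*k) := by
    have := numeric_bound k hk
    rw [hB]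
    calc (9:ℝ)^k * 4 * (((k:ℝ)+1)^3 * (4 * Real.exp 1)^k)^2
        = 4 * 9^k * ((((k:ℝ)+1)^3 * (4 * Real.exp 1)^k))^2 := by ring
      _ ≤ Real.exp (20*k) := this
  -- conclude
  have hexp : Real.exp (-(20*(k:ℝ))) * Real.exp (20*(k:ℝ)) = 1 := by
    rw [← Real.exp_add]
    simp
  calc Real.exp (-(20*(k:ℝ))) * boolVar a ^ 2
      ≤ Real.exp (-(20*(k:ℝ))) * (M * (9^k * 4 * B^2)) := by
        refine mul_le_mul_of_nonneg_left hsqchain (Real.exp_nonneg _)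
    _ ≤ Real.exp (-(20*(k:ℝ))) * (M * Real.exp (20*k)) := by
        refine mul_le_mul_of_nonneg_left ?_ (Real.exp_nonneg _)
        exact mul_le_mul_of_nonneg_left hnum hMnn
    _ = M * (Real.exp (-(20*(k:ℝ))) * Real.exp (20*(k:ℝ))) := by ring
    _ = M := by rw [hexp, mul_one]
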